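/- arXiv:1103.4072 — 3 statements merged into one kernel-verified Lean document; each statement's English description precedes it below -/
import Mathlib

section
/- For symmetric matrices A (n×n) and B (k×k) with nonnegative entries and matrices S, S' of size n×k with strictly positive entries, the inequality ∑_{i=1}^n ∑_{p=1}^k (A S' B)_{ip} S_{ip}² / S'_{ip} ≥ Tr(S^T A S B) holds. -/
/-!
Vectorising `S ↦ vec S` turns `S ↦ A * S * B` into multiplication by the symmetric, entrywise
nonnegative Kronecker matrix `W = B ⊗ₖ A`, so the claim becomes `x ⬝ᵥ W *ᵥ x ≤ ∑ₐ (W u)ₐ xₐ² / uₐ`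
with `x = vec S`, `u = vec S'`. This follows by summing `W a b` times the AM-GM inequality
`2 xₐ x_b ≤ (u_b / uₐ) xₐ² + (uₐ / u_b) x_b²` over all pairs and using the symmetry of `W`.
-/

open Matrix BigOperators

open scoped Kronecker

section OrderedField

variable {K : Type*} [Field K] [LinearOrder K] [IsStrictOrderedRing K]

theorem two_mul_mul_le_div_add_div (x y : K) {u v : K} (hu : 0 < u) (hv : 0 < v) :
    2 * (x * y) ≤ v * x ^ 2 / u + u * y ^ 2 / v := by
  rw [div_add_div _ _ hu.ne' hv.ne', le_div_iff₀ (mul_pos hu hv)]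
  nlinarith [sq_nonneg (x * v - y * u)]

theorem Matrix.IsSymm.dotProduct_mulVec_le {ι : Type*} [Fintype ι] {W : Matrix ι ι K}
    (hW : W.IsSymm) (hWnn : ∀ a b, 0 ≤ W a b) (x : ι → K) {u : ι → K} (hu : ∀ a, 0 < u a) :
    x ⬝ᵥ W *ᵥ x ≤ ∑ a, (W *ᵥ u) a * x a ^ 2 / u a := by
  set f : ι → ι → K := fun a b => W a b * (u b * x a ^ 2 / u a)
  have hlhs : x ⬝ᵥ W *ᵥ x = ∑ a, ∑ b, W a b * (x a * x b) := by
    simp only [dotProduct, mulVec, Finset.mul_sum]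
    exact Finset.sum_congr rfl fun a _ => Finset.sum_congr rfl fun b _ => by ring
  have hrhs : ∑ a, (W *ᵥ u) a * x a ^ 2 / u a = ∑ a, ∑ b, f a b := by
    simp only [f, dotProduct, mulVec, Finset.sum_mul, Finset.sum_div]
    exact Finset.sum_congr rfl fun a _ => Finset.sum_congr rfl fun b _ => by ring
  have hswap : ∑ a, ∑ b, f b a = ∑ a, ∑ b, f a b := Finset.sum_comm
  have hpair : ∀ a b, 2 * (W a b * (x a * x b)) ≤ f a b + f b a := fun a b => by
    have := mul_le_mul_of_nonneg_left (two_mul_mul_le_div_add_div (x a) (x b) (hu a) (hu b))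
      (hWnn a b)
    simp only [f, hW.apply a b]
    linarith
  have := Finset.sum_le_sum fun a (_ : a ∈ Finset.univ) =>
    Finset.sum_le_sum fun b (_ : b ∈ Finset.univ) => hpair a b
  simp only [← Finset.mul_sum, Finset.sum_add_distrib, hswap] at this
  rw [hlhs, hrhs]
  linarith

end OrderedField

theorem Matrix.IsSymm.kronecker {α m n : Type*} [Mul α] {A : Matrix m m α} {B : Matrix n n α}
    (hA : A.IsSymm) (hB : B.IsSymm) : (A ⊗ₖ B).IsSymm :=
  IsSymm.ext fun _ _ => by rw [kronecker_apply, kronecker_apply, hA.apply, hB.apply]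

theorem stmt_9_general (n k : ℕ) (A : Matrix (Fin n) (Fin n) ℝ) (hA : A.IsSymm)
    (hAnn : ∀ i j, 0 ≤ A i j)
    (B : Matrix (Fin k) (Fin k) ℝ) (hB : B.IsSymm)
    (hBnn : ∀ i j, 0 ≤ B i j)
    (S S' : Matrix (Fin n) (Fin k) ℝ)
    (hS' : ∀ i p, 0 < S' i p) :
    Matrix.trace (Sᵀ * A * S * B) ≤
      ∑ i : Fin n, ∑ p : Fin k, (A * S' * B) i p * (S i p) ^ 2 / S' i p := by
  have hvec : ∀ X : Matrix (Fin n) (Fin k) ℝ, (B ⊗ₖ A) *ᵥ vec X = vec (A * X * B) := fun X => by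
    rw [kronecker_mulVec_vec, hB.eq]
  have hlhs : trace (Sᵀ * A * S * B) = vec S ⬝ᵥ (B ⊗ₖ A) *ᵥ vec S := by
    rw [hvec, vec_dotProduct_vec, Matrix.mul_assoc, Matrix.mul_assoc, Matrix.mul_assoc]
  have hrhs : ∑ i, ∑ p, (A * S' * B) i p * S i p ^ 2 / S' i p =
      ∑ a, ((B ⊗ₖ A) *ᵥ vec S') a * vec S a ^ 2 / vec S' a := by
    rw [hvec, Fintype.sum_prod_type, Finset.sum_comm]
    rfl
  rw [hlhs, hrhs]
  exact (hB.kronecker hA).dotProduct_mulVec_le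
    (fun _ _ => mul_nonneg (hBnn _ _) (hAnn _ _)) _ fun a => hS' a.2 a.1

theorem stmt_9 (n k : ℕ) (A : Matrix (Fin n) (Fin n) ℝ) (hA : A.IsSymm)
    (hAnn : ∀ i j, 0 ≤ A i j)
    (B : Matrix (Fin k) (Fin k) ℝ) (hB : B.IsSymm)
    (hBnn : ∀ i j, 0 ≤ B i j)
    (S S' : Matrix (Fin n) (Fin k) ℝ)
    (hS : ∀ i p, 0 < S i p) (hS' : ∀ i p, 0 < S' i p) :
    Matrix.trace (Sᵀ * A * S * B) ≤
      ∑ i : Fin n, ∑ p : Fin k, (A * S' * B) i p * (S i p) ^ 2 / S' i p :=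
  stmt_9_general n k A hA hAnn B hB hBnn S S' hS'
end

section
/- If Q ∈ ℝ^{n×K} is a fixed point of the multiplicative update Q_{ik} ← Q_{ik} √[((ρI + M⁻)Q + QΛ⁻)_{ik} / ((M⁺Q + QΛ⁺)_{ik})] with positive entries and positive denominators, then ((ρI - M)Q - QΛ)_{ik} Q_{ik}² = 0 for all i,k, which in turn implies the KKT complementary slackness condition ((ρI - M)Q - QΛ)_{ik} Q_{ik} = 0. -/
open Matrix BigOperators

/-!
Splitting `M = M⁺ - M⁻` and `Λ = Λ⁺ - Λ⁻` writes the KKT residual `(ρI - M)Q - QΛ` as the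
difference of the numerator and the denominator of the multiplicative update, so the fixed-point
equation says exactly that the residual times `Q²` vanishes; cancelling one factor `Q` is then
possible in any ring without zero divisors.
-/

theorem Matrix.eq_sub_of_abs_add_div_two {α m n : Type*} [Field α] [LinearOrder α]
    [IsStrictOrderedRing α] {A P N : Matrix m n α}
    (hP : ∀ i j, P i j = (|A i j| + A i j) / 2) (hN : ∀ i j, N i j = (|A i j| - A i j) / 2) :
    A = P - N := by
  ext i j
  rw [Matrix.sub_apply, hP, hN]
  ring

theorem Matrix.smul_one_sub_sub_mul_sub_eq {R m n : Type*} [Ring R] [Fintype m]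
    [DecidableEq m] [Fintype n] (ρ : R) (Mp Mm : Matrix m m R) (Lp Lm : Matrix n n R)
    (Q : Matrix m n R) :
    (ρ • (1 : Matrix m m R) - (Mp - Mm)) * Q - Q * (Lp - Lm) =
      ((ρ • (1 : Matrix m m R) + Mm) * Q + Q * Lm) - (Mp * Q + Q * Lp) := by
  simp only [Matrix.sub_mul, Matrix.add_mul, Matrix.mul_sub]
  abel

theorem mul_eq_zero_of_mul_sq_eq_zero {R : Type*} [MonoidWithZero R] [NoZeroDivisors R]
    {x q : R} (h : x * q ^ 2 = 0) : x * q = 0 := by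
  rcases mul_eq_zero.mp h with hx | hq
  · rw [hx, zero_mul]
  · rw [pow_eq_zero_iff two_ne_zero |>.mp hq, mul_zero]

theorem stmt_16_general (n K : ℕ) (M : Matrix (Fin n) (Fin n) ℝ)
    (Lam : Matrix (Fin K) (Fin K) ℝ) (rho : ℝ)
    (Mp Mm : Matrix (Fin n) (Fin n) ℝ)
    (hMp : ∀ i j, Mp i j = (|M i j| + M i j) / 2)
    (hMm : ∀ i j, Mm i j = (|M i j| - M i j) / 2)
    (Lp Lm : Matrix (Fin K) (Fin K) ℝ)
    (hLp : ∀ k l, Lp k l = (|Lam k l| + Lam k l) / 2)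
    (hLm : ∀ k l, Lm k l = (|Lam k l| - Lam k l) / 2)
    (Q : Matrix (Fin n) (Fin K) ℝ)
    (hfix : ∀ i k, (Q i k) ^ 2 * (Mp * Q + Q * Lp) i k =
      (Q i k) ^ 2 * ((rho • (1 : Matrix (Fin n) (Fin n) ℝ) + Mm) * Q + Q * Lm) i k) :
    (∀ i k, ((rho • (1 : Matrix (Fin n) (Fin n) ℝ) - M) * Q - Q * Lam) i k
        * (Q i k) ^ 2 = 0) ∧
    (∀ i k, ((rho • (1 : Matrix (Fin n) (Fin n) ℝ) - M) * Q - Q * Lam) i k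
        * Q i k = 0) := by
  have hsq : ∀ i k, ((rho • (1 : Matrix (Fin n) (Fin n) ℝ) - M) * Q - Q * Lam) i k
      * (Q i k) ^ 2 = 0 := by
    intro i k
    rw [Matrix.eq_sub_of_abs_add_div_two hMp hMm, Matrix.eq_sub_of_abs_add_div_two hLp hLm,
      Matrix.smul_one_sub_sub_mul_sub_eq, Matrix.sub_apply]
    linear_combination (hfix i k).symm
  exact ⟨hsq, fun i k => mul_eq_zero_of_mul_sq_eq_zero (hsq i k)⟩

theorem stmt_16 (n K : ℕ) (M : Matrix (Fin n) (Fin n) ℝ) (hM : M.IsSymm)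
    (Lam : Matrix (Fin K) (Fin K) ℝ) (hLam : Lam.IsSymm) (rho : ℝ)
    (Mp Mm : Matrix (Fin n) (Fin n) ℝ)
    (hMp : ∀ i j, Mp i j = (|M i j| + M i j) / 2)
    (hMm : ∀ i j, Mm i j = (|M i j| - M i j) / 2)
    (Lp Lm : Matrix (Fin K) (Fin K) ℝ)
    (hLp : ∀ k l, Lp k l = (|Lam k l| + Lam k l) / 2)
    (hLm : ∀ k l, Lm k l = (|Lam k l| - Lam k l) / 2)
    (Q : Matrix (Fin n) (Fin K) ℝ)
    (hQnn : ∀ i k, 0 ≤ Q i k)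
    (hden : ∀ i k, 0 < (Mp * Q + Q * Lp) i k)
    (hfix : ∀ i k, (Q i k) ^ 2 * (Mp * Q + Q * Lp) i k =
      (Q i k) ^ 2 * ((rho • (1 : Matrix (Fin n) (Fin n) ℝ) + Mm) * Q + Q * Lm) i k) :
    (∀ i k, ((rho • (1 : Matrix (Fin n) (Fin n) ℝ) - M) * Q - Q * Lam) i k
        * (Q i k) ^ 2 = 0) ∧
    (∀ i k, ((rho • (1 : Matrix (Fin n) (Fin n) ℝ) - M) * Q - Q * Lam) i k
        * Q i k = 0) :=
  stmt_16_general n K M Lam rho Mp Mm hMp hMm Lp Lm hLp hLm Q hfix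
end

section
/- Under the same setup, Z(H,H̃) ≤ L(H) for all H, H̃ with strictly positive entries; i.e., Z is an auxiliary function minorizing L, with equality at H = H̃. -/
/-!
Every term of `Z H H̃` is compared with the matching trace term of `L H`. The two terms entering
`L` with a plus sign are minorized summand by summand through `1 + log z ≤ z`. For the two
entering with a minus sign, `Tr (Sᵀ A S) ≤ ∑ (A S') S² / S'` for symmetric nonnegative `A`:
pairing the summands indexed by `(i, j)` and `(j, i)` reduces it to
`2ab ≤ y a² / x + x b² / y`. At `H̃ = H` every one of these bounds is an equality.
-/

open Matrix BigOperators

theorem mul_one_add_log_div_le {p q : ℝ} (hp : 0 < p) (hq : 0 < q) :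
    q * (1 + Real.log (p / q)) ≤ p :=
  calc q * (1 + Real.log (p / q)) ≤ q * (p / q) := by
        gcongr
        linarith [Real.log_le_sub_one_of_pos (div_pos hp hq)]
    _ = p := mul_div_cancel₀ p hq.ne'

theorem mul_one_add_log_div_self (q : ℝ) : q * (1 + Real.log (q / q)) = q := by
  rcases eq_or_ne q 0 with rfl | hq
  · simp
  · simp [div_self hq]

theorem two_mul_mul_le_mul_sq_div_add_mul_sq_div (a b : ℝ) {x y : ℝ} (hx : 0 < x) (hy : 0 < y) :
    2 * (a * b) ≤ y * a ^ 2 / x + x * b ^ 2 / y := by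
  have h : y * a ^ 2 / x + x * b ^ 2 / y - 2 * (a * b) = (a * y - b * x) ^ 2 / (x * y) := by
    field_simp
    ring
  linarith [div_nonneg (sq_nonneg (a * y - b * x)) (mul_pos hx hy).le]

namespace Matrix

variable {m p : Type*} [Fintype m] [Fintype p]

section CommSemiring

variable {R : Type*} [CommSemiring R]

theorem trace_transpose_mul_mul_eq_sum (A : Matrix m m R) (S : Matrix m p R) :
    trace (Sᵀ * A * S) = ∑ i, ∑ j, ∑ k, A i j * S i k * S j k := by
  simp only [trace, diag, mul_apply, transpose_apply, Finset.sum_mul]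
  rw [Finset.sum_comm]
  refine (Finset.sum_congr rfl fun _ _ => Finset.sum_comm).trans ?_
  rw [Finset.sum_comm]
  exact Finset.sum_congr rfl fun i _ => Finset.sum_congr rfl fun j _ =>
    Finset.sum_congr rfl fun k _ => by ring

theorem trace_mul_transpose_mul_self_eq_sum (B : Matrix p p R) (S : Matrix m p R) :
    trace (B * (Sᵀ * S)) = ∑ i, ∑ k, ∑ l, B k l * S i k * S i l := by
  simp only [trace, diag, mul_apply, transpose_apply, Finset.mul_sum]
  refine (Finset.sum_congr rfl fun _ _ => Finset.sum_comm).trans ?_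
  rw [Finset.sum_comm]
  exact Finset.sum_congr rfl fun i _ => Finset.sum_congr rfl fun k _ =>
    Finset.sum_congr rfl fun l _ => by ring

theorem trace_transpose_mul_eq_sum_mul (S T : Matrix m p R) :
    trace (Sᵀ * T) = ∑ i, ∑ k, T i k * S i k := by
  simp only [trace, diag, mul_apply, transpose_apply]
  rw [Finset.sum_comm]
  exact Finset.sum_congr rfl fun i _ => Finset.sum_congr rfl fun k _ => mul_comm _ _

end CommSemiring

theorem trace_transpose_mul_mul_le_sum_sq_div {A : Matrix m m ℝ} (hA : A.IsSymm)
    (hA0 : ∀ i j, 0 ≤ A i j) (S : Matrix m p ℝ) {S' : Matrix m p ℝ}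
    (hS' : ∀ i k, 0 < S' i k) :
    trace (Sᵀ * A * S) ≤ ∑ i, ∑ k, (A * S') i k * S i k ^ 2 / S' i k := by
  set R := ∑ i, ∑ j, ∑ k, A i j * (S' j k * S i k ^ 2 / S' i k) with hR
  have hRHS : ∑ i, ∑ k, (A * S') i k * S i k ^ 2 / S' i k = R := by
    refine Finset.sum_congr rfl fun i _ => ?_
    simp only [mul_apply, Finset.sum_mul, Finset.sum_div]
    rw [Finset.sum_comm]
    exact Finset.sum_congr rfl fun j _ => Finset.sum_congr rfl fun k _ => by ring
  have hR' : R = ∑ i, ∑ j, ∑ k, A i j * (S' i k * S j k ^ 2 / S' j k) := by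
    rw [hR, Finset.sum_comm]
    exact Finset.sum_congr rfl fun i _ => Finset.sum_congr rfl fun j _ =>
      Finset.sum_congr rfl fun k _ => by rw [hA.apply]
  have h2 : 2 * trace (Sᵀ * A * S) ≤ R + R := by
    nth_rewrite 2 [hR']
    rw [trace_transpose_mul_mul_eq_sum, hR]
    simp only [Finset.mul_sum, ← Finset.sum_add_distrib]
    gcongr with i _ j _ k _
    have := mul_le_mul_of_nonneg_left
      (two_mul_mul_le_mul_sq_div_add_mul_sq_div (S i k) (S j k) (hS' i k) (hS' j k)) (hA0 i j)
    linarith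
  linarith

theorem sum_sq_div_self_eq_trace_transpose_mul_mul (A : Matrix m m ℝ) (S : Matrix m p ℝ) :
    ∑ i, ∑ k, (A * S) i k * S i k ^ 2 / S i k = trace (Sᵀ * A * S) := by
  rw [Matrix.mul_assoc, trace_transpose_mul_eq_sum_mul]
  exact Finset.sum_congr rfl fun i _ => Finset.sum_congr rfl fun k _ => by
    rw [mul_div_assoc, sq, mul_self_div_self]

theorem trace_mul_transpose_mul_self_le_sum_sq_div {B : Matrix p p ℝ} (hB : B.IsSymm)
    (hB0 : ∀ k l, 0 ≤ B k l) (S : Matrix m p ℝ) {S' : Matrix m p ℝ}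
    (hS' : ∀ i k, 0 < S' i k) :
    trace (B * (Sᵀ * S)) ≤ ∑ i, ∑ k, (S' * B) i k * S i k ^ 2 / S' i k := by
  have h := trace_transpose_mul_mul_le_sum_sq_div hB hB0 Sᵀ (S' := S'ᵀ) fun k i => hS' i k
  rw [transpose_transpose, trace_mul_cycle, trace_mul_comm, ← hB.eq, ← transpose_mul] at h
  simpa only [transpose_apply, hB.eq, Finset.sum_comm (γ := m)] using h

theorem sum_sq_div_self_eq_trace_mul_transpose_mul_self (B : Matrix p p ℝ) (S : Matrix m p ℝ) :
    ∑ i, ∑ k, (S * B) i k * S i k ^ 2 / S i k = trace (B * (Sᵀ * S)) := by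
  rw [trace_mul_comm, Matrix.mul_assoc, trace_transpose_mul_eq_sum_mul]
  exact Finset.sum_congr rfl fun i _ => Finset.sum_congr rfl fun k _ => by
    rw [mul_div_assoc, sq, mul_self_div_self]

theorem sum_one_add_log_le_trace_transpose_mul_mul {A : Matrix m m ℝ} (hA0 : ∀ i j, 0 ≤ A i j)
    {H H' : Matrix m p ℝ} (hH : ∀ i k, 0 < H i k) (hH' : ∀ i k, 0 < H' i k) :
    ∑ i, ∑ j, ∑ k,
        A i j * H' i k * H' j k * (1 + Real.log (H i k * H j k / (H' i k * H' j k)))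
      ≤ trace (Hᵀ * A * H) := by
  rw [trace_transpose_mul_mul_eq_sum]
  refine Finset.sum_le_sum fun i _ => Finset.sum_le_sum fun j _ => Finset.sum_le_sum fun k _ => ?_
  rw [mul_assoc (A i j) (H' i k), mul_assoc (A i j) (H i k), mul_assoc (A i j)]
  exact mul_le_mul_of_nonneg_left
    (mul_one_add_log_div_le (mul_pos (hH i k) (hH j k)) (mul_pos (hH' i k) (hH' j k))) (hA0 i j)

theorem sum_one_add_log_self_eq_trace_transpose_mul_mul (A : Matrix m m ℝ) (H : Matrix m p ℝ) :
    ∑ i, ∑ j, ∑ k, A i j * H i k * H j k * (1 + Real.log (H i k * H j k / (H i k * H j k)))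
      = trace (Hᵀ * A * H) := by
  rw [trace_transpose_mul_mul_eq_sum]
  exact Finset.sum_congr rfl fun i _ => Finset.sum_congr rfl fun j _ => Finset.sum_congr rfl
    fun k _ => by rw [mul_assoc (A i j) (H i k), mul_assoc (A i j), mul_one_add_log_div_self]

theorem sum_one_add_log_le_trace_mul_transpose_mul_self {B : Matrix p p ℝ}
    (hB0 : ∀ k l, 0 ≤ B k l) {H H' : Matrix m p ℝ} (hH : ∀ i k, 0 < H i k)
    (hH' : ∀ i k, 0 < H' i k) :
    ∑ i, ∑ k, ∑ l,
        B k l * H' i k * H' i l * (1 + Real.log (H i k * H i l / (H' i k * H' i l)))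
      ≤ trace (B * (Hᵀ * H)) := by
  rw [trace_mul_transpose_mul_self_eq_sum]
  refine Finset.sum_le_sum fun i _ => Finset.sum_le_sum fun k _ => Finset.sum_le_sum fun l _ => ?_
  rw [mul_assoc (B k l) (H' i k), mul_assoc (B k l) (H i k), mul_assoc (B k l)]
  exact mul_le_mul_of_nonneg_left
    (mul_one_add_log_div_le (mul_pos (hH i k) (hH i l)) (mul_pos (hH' i k) (hH' i l))) (hB0 k l)

theorem sum_one_add_log_self_eq_trace_mul_transpose_mul_self (B : Matrix p p ℝ)
    (H : Matrix m p ℝ) :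
    ∑ i, ∑ k, ∑ l, B k l * H i k * H i l * (1 + Real.log (H i k * H i l / (H i k * H i l)))
      = trace (B * (Hᵀ * H)) := by
  rw [trace_mul_transpose_mul_self_eq_sum]
  exact Finset.sum_congr rfl fun i _ => Finset.sum_congr rfl fun k _ => Finset.sum_congr rfl
    fun l _ => by rw [mul_assoc (B k l) (H i k), mul_assoc (B k l), mul_one_add_log_div_self]

end Matrix

theorem stmt_19 (n K : ℕ) (M : Matrix (Fin n) (Fin n) ℝ) (hM : M.IsSymm)
    (Lam : Matrix (Fin K) (Fin K) ℝ) (hLam : Lam.IsSymm) (rho : ℝ) (hrho : 0 ≤ rho)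
    (Mp Mm : Matrix (Fin n) (Fin n) ℝ)
    (hMp : ∀ i j, Mp i j = (|M i j| + M i j) / 2)
    (hMm : ∀ i j, Mm i j = (|M i j| - M i j) / 2)
    (Lp Lm : Matrix (Fin K) (Fin K) ℝ)
    (hLp : ∀ k l, Lp k l = (|Lam k l| + Lam k l) / 2)
    (hLm : ∀ k l, Lm k l = (|Lam k l| - Lam k l) / 2)
    (Z : Matrix (Fin n) (Fin K) ℝ → Matrix (Fin n) (Fin K) ℝ → ℝ)
    (hZ : ∀ H Ht, Z H Ht =
      (∑ i, ∑ j, ∑ k, (rho * (if i = j then (1:ℝ) else 0) + Mm i j)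
          * Ht i k * Ht j k
          * (1 + Real.log (H i k * H j k / (Ht i k * Ht j k))))
      + (∑ i, ∑ k, ∑ l, Lm k l * Ht i k * Ht i l
          * (1 + Real.log (H i k * H i l / (Ht i k * Ht i l))))
      - (∑ i, ∑ k, (Mp * Ht) i k * (H i k) ^ 2 / Ht i k)
      - (∑ i, ∑ k, (Ht * Lp) i k * (H i k) ^ 2 / Ht i k))
    (L : Matrix (Fin n) (Fin K) ℝ → ℝ)
    (hL : ∀ H, L H = Matrix.trace
      (Hᵀ * (rho • (1 : Matrix (Fin n) (Fin n) ℝ) + Mm) * H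
        + Lm * (Hᵀ * H) - Hᵀ * Mp * H - Lp * (Hᵀ * H))) :
    ∀ H Ht : Matrix (Fin n) (Fin K) ℝ,
      (∀ i k, 0 < H i k) → (∀ i k, 0 < Ht i k) →
      Z H Ht ≤ L H ∧ Z H H = L H := by
  intro H Ht hH hHt
  set A := rho • (1 : Matrix (Fin n) (Fin n) ℝ) + Mm
  have hA : ∀ i j, rho * (if i = j then (1:ℝ) else 0) + Mm i j = A i j := fun i j => by
    simp [A, one_apply]
  have hA0 : ∀ i j, 0 ≤ A i j := fun i j => by
    rw [← hA, hMm]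
    split_ifs <;> linarith [le_abs_self (M i j)]
  have hLm0 : ∀ k l, 0 ≤ Lm k l := fun k l => by rw [hLm]; linarith [le_abs_self (Lam k l)]
  have hMp0 : ∀ i j, 0 ≤ Mp i j := fun i j => by rw [hMp]; linarith [neg_abs_le (M i j)]
  have hLp0 : ∀ k l, 0 ≤ Lp k l := fun k l => by rw [hLp]; linarith [neg_abs_le (Lam k l)]
  have hMpS : Mp.IsSymm := IsSymm.ext fun i j => by rw [hMp, hMp, hM.apply]
  have hLpS : Lp.IsSymm := IsSymm.ext fun k l => by rw [hLp, hLp, hLam.apply]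
  have hLH : L H = trace (Hᵀ * A * H) + trace (Lm * (Hᵀ * H)) - trace (Hᵀ * Mp * H)
      - trace (Lp * (Hᵀ * H)) := by
    rw [hL, trace_sub, trace_sub, trace_add]
  simp only [hA] at hZ
  constructor
  · rw [hZ, hLH]
    linarith [sum_one_add_log_le_trace_transpose_mul_mul hA0 hH hHt,
      sum_one_add_log_le_trace_mul_transpose_mul_self hLm0 hH hHt,
      trace_transpose_mul_mul_le_sum_sq_div hMpS hMp0 H hHt,
      trace_mul_transpose_mul_self_le_sum_sq_div hLpS hLp0 H hHt]
  · rw [hZ, hLH, sum_one_add_log_self_eq_trace_transpose_mul_mul,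
      sum_one_add_log_self_eq_trace_mul_transpose_mul_self,
      sum_sq_div_self_eq_trace_transpose_mul_mul, sum_sq_div_self_eq_trace_mul_transpose_mul_self]
end
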